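/- The sum ∂ := ∂_M + ∂_I : ℤ[Ω] → ℤ[Ω] is a differential, i.e. ∂ ∘ ∂ = 0. -/

import Mathlib

/-!
Compositions (finite lists of positive integers) and the merge/insert operators
on the free ℤ-module with basis the set Ω of all compositions.
-/

/-- The merge operation `M_k` (0-indexed): merge the adjacent entries at
positions `k` and `k+1` into a single entry equal to their sum. -/
def mergeAt (ω : List ℕ+) (k : ℕ) : List ℕ+ :=
  ω.take k ++ (ω.getD k 1 + ω.getD (k + 1) 1) :: ω.drop (k + 2)

/-- The insert operation `I_k`: insert a new entry `2` immediately after the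
first `k` entries. -/
def insertAt2 (ω : List ℕ+) (k : ℕ) : List ℕ+ :=
  ω.take k ++ (2 : ℕ+) :: ω.drop k

open Finset Finsupp

lemma mergeAt_cons_succ (a : ℕ+) (ω : List ℕ+) (k : ℕ) :
    mergeAt (a :: ω) (k+1) = a :: mergeAt ω k := by
  simp [mergeAt, List.getD]

lemma mergeAt_zero (a b : ℕ+) (ω : List ℕ+) :
    mergeAt (a :: b :: ω) 0 = (a + b) :: ω := by
  simp [mergeAt, List.getD]

lemma insertAt2_cons_succ (a : ℕ+) (ω : List ℕ+) (k : ℕ) :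
    insertAt2 (a :: ω) (k+1) = a :: insertAt2 ω k := by
  simp [insertAt2]

lemma insertAt2_zero (ω : List ℕ+) : insertAt2 ω 0 = 2 :: ω := by
  simp [insertAt2]

lemma insertAt2_nil (k : ℕ) : insertAt2 [] k = [2] := by
  simp [insertAt2]

lemma length_mergeAt (ω : List ℕ+) (k : ℕ) (h : k + 1 < ω.length) :
    (mergeAt ω k).length = ω.length - 1 := by
  simp [mergeAt]; omega

lemma length_insertAt2 (ω : List ℕ+) (k : ℕ) (h : k ≤ ω.length) :
    (insertAt2 ω k).length = ω.length + 1 := by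
  simp [insertAt2]; omega

lemma merge_merge : ∀ (ω : List ℕ+) (j m : ℕ), j + m + 2 < ω.length →
    mergeAt (mergeAt ω (j+m+1)) j = mergeAt (mergeAt ω j) (j+m)
  | [], j, m, h => by simp at h
  | [a], j, m, h => by simp at h
  | a :: b :: t, 0, 0, h => by
    match t, h with
    | c :: u, _ =>
      simp only [Nat.zero_add]
      rw [mergeAt_cons_succ a (b::c::u) 0, mergeAt_zero b c u, mergeAt_zero,
        mergeAt_zero a b (c::u), mergeAt_zero, add_assoc]
  | a :: b :: t, 0, m+1, h => by
    simp only [Nat.zero_add]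
    rw [mergeAt_cons_succ a (b::t) (m+1), mergeAt_cons_succ b t m,
      mergeAt_zero a b (mergeAt t m), mergeAt_zero a b t,
      mergeAt_cons_succ (a+b) t m]
  | a :: t, j+1, m, h => by
    rw [show j+1+m+1 = (j+m+1)+1 by ring, mergeAt_cons_succ a t (j+m+1),
      mergeAt_cons_succ a (mergeAt t (j+m+1)) j, mergeAt_cons_succ a t j,
      show j+1+m = (j+m)+1 by ring, mergeAt_cons_succ a (mergeAt t j) (j+m),
      merge_merge t j m (by simp at h; omega)]

lemma insert_insert : ∀ (ω : List ℕ+) (j m : ℕ),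
    insertAt2 (insertAt2 ω (j+m)) j = insertAt2 (insertAt2 ω j) (j+m+1)
  | ω, 0, m => by
    simp only [Nat.zero_add]
    rw [insertAt2_zero ω, insertAt2_zero (insertAt2 ω m), insertAt2_cons_succ 2 ω m]
  | [], j+1, m => by
    rw [insertAt2_nil, insertAt2_nil]
    show insertAt2 [2] (j+1) = insertAt2 [2] (j+1+m+1)
    simp [insertAt2]
  | a :: t, j+1, m => by
    rw [show j+1+m+1 = (j+m+1)+1 by ring, show j+1+m = (j+m)+1 by ring,
      insertAt2_cons_succ a t (j+m),
      insertAt2_cons_succ a (insertAt2 t (j+m)) j, insertAt2_cons_succ a t j,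
      insertAt2_cons_succ a (insertAt2 t j) (j+m+1), insert_insert t j m]

lemma merge_insert_right : ∀ (ω : List ℕ+) (k d : ℕ), k + d + 1 < ω.length →
    mergeAt (insertAt2 ω k) (k+d+1) = insertAt2 (mergeAt ω (k+d)) k
  | ω, 0, d, h => by
    simp only [Nat.zero_add]
    rw [insertAt2_zero ω, mergeAt_cons_succ 2 ω d, insertAt2_zero (mergeAt ω d)]
  | [], k+1, d, h => by simp at h
  | a :: t, k+1, d, h => by
    rw [insertAt2_cons_succ a t k, show k+1+d+1 = (k+d+1)+1 by ring,
      mergeAt_cons_succ a (insertAt2 t k) (k+d+1),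
      show k+1+d = (k+d)+1 by ring, mergeAt_cons_succ a t (k+d),
      insertAt2_cons_succ a (mergeAt t (k+d)) k,
      merge_insert_right t k d (by simp at h; omega)]

lemma merge_insert_left : ∀ (ω : List ℕ+) (j d : ℕ), j + 1 < ω.length →
    mergeAt (insertAt2 ω (j+d+2)) j = insertAt2 (mergeAt ω j) (j+d+1)
  | [], j, d, h => by simp at h
  | [a], j, d, h => by simp at h
  | a :: b :: t, 0, d, h => by
    simp only [Nat.zero_add]
    rw [show d+2 = (d+1)+1 by ring, insertAt2_cons_succ a (b::t) (d+1),
      insertAt2_cons_succ b t d, mergeAt_zero a b (insertAt2 t d),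
      mergeAt_zero a b t, insertAt2_cons_succ (a+b) t d]
  | a :: b :: t, j+1, d, h => by
    rw [show j+1+d+2 = (j+d+2)+1 by ring, insertAt2_cons_succ a (b::t) (j+d+2),
      mergeAt_cons_succ a (insertAt2 (b::t) (j+d+2)) j,
      mergeAt_cons_succ a (b::t) j,
      show j+1+d+1 = (j+d+1)+1 by ring,
      insertAt2_cons_succ a (mergeAt (b::t) j) (j+d+1),
      merge_insert_left (b :: t) j d (by simp at h ⊢; omega)]

lemma merge_insert_adj : ∀ (ω : List ℕ+) (j : ℕ), j < ω.length →
    mergeAt (insertAt2 ω j) j = mergeAt (insertAt2 ω (j+1)) j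
  | [], j, h => by simp at h
  | a :: t, 0, h => by
    rw [insertAt2_zero (a::t), mergeAt_zero 2 a t, insertAt2_cons_succ a t 0,
      insertAt2_zero t, mergeAt_zero a 2 t, add_comm]
  | a :: t, j+1, h => by
    rw [insertAt2_cons_succ a t j, mergeAt_cons_succ a (insertAt2 t j) j,
      insertAt2_cons_succ a t (j+1), mergeAt_cons_succ a (insertAt2 t (j+1)) j,
      merge_insert_adj t j (by simp at h; omega)]

open Finset Finsupp

abbrev V := List ℕ+ →₀ ℤ

lemma sign_cancel (p q : ℕ) (h : (p + q) % 2 = 1) (x : V) :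
    ((-1:ℤ)^p) • x + ((-1:ℤ)^q) • x = 0 := by
  have hpq : ((-1:ℤ)^p) + ((-1:ℤ)^q) = 0 := by
    rcases Nat.even_or_odd p with hp | hp
    · have hq : Odd q := Nat.odd_iff.2 (by have := Nat.even_iff.1 hp; omega)
      rw [hp.neg_one_pow, hq.neg_one_pow]; ring
    · have hq : Even q := Nat.even_iff.2 (by have := Nat.odd_iff.1 hp; omega)
      rw [hp.neg_one_pow, hq.neg_one_pow]; ring
  rw [← add_smul, hpq, zero_smul]

lemma sumA (ω : List ℕ+) :
    ∑ p ∈ range (ω.length - 1) ×ˢ range (ω.length - 2),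
      ((-1:ℤ)^(p.1+p.2)) • Finsupp.single (mergeAt (mergeAt ω p.1) p.2) (1:ℤ) = 0 := by
  set s := ω.length
  apply Finset.sum_involution
    (fun p _ => if p.2 < p.1 then (p.2, p.1 - 1) else (p.2 + 1, p.1))
  · rintro ⟨k, j⟩ hm
    simp only [mem_product, mem_range] at hm
    by_cases hc : j < k
    · simp only [hc, if_pos]
      obtain ⟨m, rfl⟩ : ∃ m, k = j + m + 1 := ⟨k - j - 1, by omega⟩
      rw [merge_merge ω j m (by omega)]
      exact sign_cancel _ _ (by omega) _
    · simp only [hc, if_neg, not_false_iff]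
      push_neg at hc
      obtain ⟨m, rfl⟩ : ∃ m, j = k + m := ⟨j - k, by omega⟩
      rw [show k + m + 1 + k = k + (k + m) + 1 by ring,
        ← merge_merge ω k m (by omega)]
      exact sign_cancel _ _ (by omega) _
  · rintro ⟨k, j⟩ hm _
    by_cases hc : j < k <;> simp [hc, Prod.ext_iff] <;> omega
  · rintro ⟨k, j⟩ hm
    by_cases hc : j < k
    · simp only [hc, if_pos]
      rw [if_neg (by omega : ¬ (k - 1 < j)), show k - 1 + 1 = k by omega]
    · simp only [hc, if_neg, not_false_iff]
      rw [if_pos (by omega : k < j + 1), show j + 1 - 1 = j by omega]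
  · rintro ⟨k, j⟩ hm
    simp only [mem_product, mem_range] at hm ⊢
    by_cases hc : j < k <;> simp [hc] <;> omega

lemma sumD (ω : List ℕ+) :
    ∑ p ∈ range (ω.length + 1) ×ˢ range (ω.length + 2),
      ((-1:ℤ)^(p.1+p.2)) • Finsupp.single (insertAt2 (insertAt2 ω p.1) p.2) (1:ℤ) = 0 := by
  set s := ω.length
  apply Finset.sum_involution
    (fun p _ => if p.2 ≤ p.1 then (p.2, p.1 + 1) else (p.2 - 1, p.1))
  · rintro ⟨k, j⟩ hm
    simp only [mem_product, mem_range] at hm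
    by_cases hc : j ≤ k
    · simp only [hc, if_pos]
      obtain ⟨m, rfl⟩ : ∃ m, k = j + m := ⟨k - j, by omega⟩
      rw [insert_insert ω j m]
      exact sign_cancel _ _ (by omega) _
    · simp only [hc, if_neg, not_false_iff]
      push_neg at hc
      obtain ⟨m, rfl⟩ : ∃ m, j = k + m + 1 := ⟨j - k - 1, by omega⟩
      rw [show k + m + 1 - 1 = k + m by omega, show k + (k + m + 1) = k + m + 1 + k by ring,
        ← insert_insert ω k m]
      exact sign_cancel _ _ (by omega) _
  · rintro ⟨k, j⟩ hm _
    by_cases hc : j ≤ k <;> simp [hc, Prod.ext_iff] <;> omega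
  · rintro ⟨k, j⟩ hm
    by_cases hc : j ≤ k
    · simp only [hc, if_pos]
      rw [if_neg (by omega : ¬ (k + 1 ≤ j)), show k + 1 - 1 = k by omega]
    · simp only [hc, if_neg, not_false_iff]
      rw [if_pos (by omega : k ≤ j - 1), show j - 1 + 1 = j by omega]
  · rintro ⟨k, j⟩ hm
    simp only [mem_product, mem_range] at hm ⊢
    by_cases hc : j ≤ k <;> simp [hc] <;> omega

def gBC : ℕ × ℕ ⊕ ℕ × ℕ → ℕ × ℕ ⊕ ℕ × ℕ
  | .inl (k, j) => if k < j then .inr (j + 1, k) else .inr (j, k + 1)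
  | .inr (k, j) =>
    if j + 2 ≤ k then .inl (j, k - 1)
    else if k + 1 ≤ j then .inl (j - 1, k)
    else if j = k then .inr (k + 1, k) else .inr (k - 1, k - 1)

lemma sumBC (ω : List ℕ+) :
    (∑ p ∈ range (ω.length - 1) ×ˢ range ω.length,
      ((-1:ℤ)^(p.1+p.2)) • Finsupp.single (insertAt2 (mergeAt ω p.1) p.2) (1:ℤ))
    + ∑ p ∈ range (ω.length + 1) ×ˢ range ω.length,
      ((-1:ℤ)^(p.1+p.2)) • Finsupp.single (mergeAt (insertAt2 ω p.1) p.2) (1:ℤ) = 0 := by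
  set s := ω.length with hs
  rw [← Finset.sum_sumElim]
  apply Finset.sum_involution (fun p _ => gBC p)
  · rintro (⟨k, j⟩ | ⟨k, j⟩) hm <;>
      simp only [Finset.inl_mem_disjSum, Finset.inr_mem_disjSum, mem_product, mem_range] at hm
    · by_cases hc : k < j
      · obtain ⟨d, rfl⟩ : ∃ d, j = k + d + 1 := ⟨j - k - 1, by omega⟩
        have e1 : gBC (Sum.inl (k, k + d + 1)) = Sum.inr (k + d + 1 + 1, k) := by
          simp [gBC, hc]
        rw [e1, Sum.elim_inl, Sum.elim_inr]
        rw [show k + d + 1 + 1 = k + d + 2 by ring, merge_insert_left ω k d (by omega)]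
        exact sign_cancel _ _ (by omega) _
      · obtain ⟨d, rfl⟩ : ∃ d, k = j + d := ⟨k - j, by omega⟩
        have e1 : gBC (Sum.inl (j + d, j)) = Sum.inr (j, j + d + 1) := by
          simp [gBC, hc]
        rw [e1, Sum.elim_inl, Sum.elim_inr]
        rw [merge_insert_right ω j d (by omega)]
        exact sign_cancel _ _ (by omega) _
    · by_cases h1 : j + 2 ≤ k
      · obtain ⟨d, rfl⟩ : ∃ d, k = j + d + 2 := ⟨k - j - 2, by omega⟩
        have e1 : gBC (Sum.inr (j + d + 2, j)) = Sum.inl (j, j + d + 1) := by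
          simp only [gBC]
          rw [if_pos (by omega : j + 2 ≤ j + d + 2), show j + d + 2 - 1 = j + d + 1 by omega]
        rw [e1, Sum.elim_inl, Sum.elim_inr]
        rw [merge_insert_left ω j d (by omega)]
        exact sign_cancel _ _ (by omega) _
      by_cases h2 : k + 1 ≤ j
      · obtain ⟨d, rfl⟩ : ∃ d, j = k + d + 1 := ⟨j - k - 1, by omega⟩
        have e1 : gBC (Sum.inr (k, k + d + 1)) = Sum.inl (k + d, k) := by
          simp only [gBC]
          rw [if_neg (by omega : ¬ (k + d + 1 + 2 ≤ k)),
            if_pos (by omega : k + 1 ≤ k + d + 1), show k + d + 1 - 1 = k + d by omega]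
        rw [e1, Sum.elim_inl, Sum.elim_inr]
        rw [merge_insert_right ω k d (by omega)]
        exact sign_cancel _ _ (by omega) _
      by_cases h3 : j = k
      · subst h3
        have e1 : gBC (Sum.inr (j, j)) = Sum.inr (j + 1, j) := by
          simp only [gBC]
          rw [if_neg (by omega : ¬ (j + 2 ≤ j)), if_neg (by omega : ¬ (j + 1 ≤ j)),
            ]
          simp
        rw [e1, Sum.elim_inr, Sum.elim_inr]
        rw [merge_insert_adj ω j (by omega)]
        exact sign_cancel _ _ (by omega) _
      · obtain rfl : k = j + 1 := by omega
        have e1 : gBC (Sum.inr (j + 1, j)) = Sum.inr (j, j) := by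
          simp only [gBC]
          rw [if_neg (by omega : ¬ (j + 2 ≤ j + 1)), if_neg (by omega : ¬ (j + 1 + 1 ≤ j)),
            if_neg (by omega : ¬ (j = j + 1)), show j + 1 - 1 = j by omega]
        rw [e1, Sum.elim_inr, Sum.elim_inr]
        rw [merge_insert_adj ω j (by omega)]
        exact sign_cancel _ _ (by omega) _
  · rintro (⟨k, j⟩ | ⟨k, j⟩) hm hne
    · by_cases hc : k < j <;> simp [gBC, hc]
    · by_cases h1 : j + 2 ≤ k
      · simp [gBC, h1]
      by_cases h2 : k + 1 ≤ j
      · simp [gBC, h1, h2]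
      by_cases h3 : j = k <;> simp [gBC, h1, h2, h3] <;> omega
  · rintro (⟨k, j⟩ | ⟨k, j⟩) hm <;>
      simp only [Finset.inl_mem_disjSum, Finset.inr_mem_disjSum, mem_product, mem_range] at hm ⊢
    · by_cases hc : k < j <;> simp [gBC, hc] <;> all_goals omega
    · by_cases h1 : j + 2 ≤ k
      · simp [gBC, h1]; omega
      by_cases h2 : k + 1 ≤ j
      · simp [gBC, h1, h2]; omega
      by_cases h3 : j = k <;> simp [gBC, h1, h2, h3] <;> omega
  · rintro (⟨k, j⟩ | ⟨k, j⟩) hm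
    · show gBC (gBC (Sum.inl (k, j))) = Sum.inl (k, j)
      by_cases hc : k < j
      · have e1 : gBC (Sum.inl (k, j)) = Sum.inr (j + 1, k) := by simp [gBC, hc]
        rw [e1]
        simp only [gBC]
        rw [if_pos (by omega : k + 2 ≤ j + 1), show j + 1 - 1 = j by omega]
      · have e1 : gBC (Sum.inl (k, j)) = Sum.inr (j, k + 1) := by simp [gBC, hc]
        rw [e1]
        simp only [gBC]
        rw [if_neg (by omega : ¬ (k + 1 + 2 ≤ j)), if_pos (by omega : j + 1 ≤ k + 1),
          show k + 1 - 1 = k by omega]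
    · show gBC (gBC (Sum.inr (k, j))) = Sum.inr (k, j)
      by_cases h1 : j + 2 ≤ k
      · have e1 : gBC (Sum.inr (k, j)) = Sum.inl (j, k - 1) := by
          simp only [gBC]; rw [if_pos h1]
        rw [e1]
        simp only [gBC]
        rw [if_pos (by omega : j < k - 1), show k - 1 + 1 = k by omega]
      by_cases h2 : k + 1 ≤ j
      · have e1 : gBC (Sum.inr (k, j)) = Sum.inl (j - 1, k) := by
          simp only [gBC]; rw [if_neg h1, if_pos h2]
        rw [e1]
        simp only [gBC]
        rw [if_neg (by omega : ¬ (j - 1 < k)), show j - 1 + 1 = j by omega]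
      by_cases h3 : j = k
      · subst h3
        have e1 : gBC (Sum.inr (j, j)) = Sum.inr (j + 1, j) := by
          simp only [gBC]; rw [if_neg h1, if_neg h2]; simp
        rw [e1]
        simp only [gBC]
        rw [if_neg (by omega : ¬ (j + 2 ≤ j + 1)), if_neg (by omega : ¬ (j + 1 + 1 ≤ j)),
          if_neg (by omega : ¬ (j = j + 1)), show j + 1 - 1 = j by omega]
      · obtain rfl : k = j + 1 := by omega
        have e1 : gBC (Sum.inr (j + 1, j)) = Sum.inr (j, j) := by
          simp only [gBC]
          rw [if_neg h1, if_neg h2, if_neg h3, show j + 1 - 1 = j by omega]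
        rw [e1]
        simp only [gBC]
        rw [if_neg (by omega : ¬ (j + 2 ≤ j)), if_neg (by omega : ¬ (j + 1 ≤ j))]
        simp

/-- The merge differential `∂_M` on `ℤ[Ω]`, defined on a basis element `ω` of
length `s` by `∂_M(ω) = −Σ_{k=1}^{s−1} (−1)^k M_k(ω)`; in the 0-indexed
convention this is `Σ_{k=0}^{s−2} (−1)^k (merge at k)`. -/
noncomputable def dM : (List ℕ+ →₀ ℤ) →ₗ[ℤ] (List ℕ+ →₀ ℤ) :=
  Finsupp.lsum ℤ fun ω => LinearMap.toSpanSingleton ℤ _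
    (∑ k ∈ Finset.range (ω.length - 1),
      ((-1 : ℤ) ^ k) • Finsupp.single (mergeAt ω k) (1 : ℤ))

/-- The insert differential `∂_I` on `ℤ[Ω]`, defined on a basis element `ω` of
length `s` by `∂_I(ω) = Σ_{k=0}^{s} (−1)^k I_k(ω)`. -/
noncomputable def dI : (List ℕ+ →₀ ℤ) →ₗ[ℤ] (List ℕ+ →₀ ℤ) :=
  Finsupp.lsum ℤ fun ω => LinearMap.toSpanSingleton ℤ _
    (∑ k ∈ Finset.range (ω.length + 1),
      ((-1 : ℤ) ^ k) • Finsupp.single (insertAt2 ω k) (1 : ℤ))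

lemma step (τ : List ℕ+) :
    (dM + dI) (Finsupp.single τ (1:ℤ)) =
      (∑ k ∈ range (τ.length - 1), ((-1:ℤ)^k) • Finsupp.single (mergeAt τ k) (1:ℤ))
      + ∑ k ∈ range (τ.length + 1), ((-1:ℤ)^k) • Finsupp.single (insertAt2 τ k) (1:ℤ) := by
  simp [dM, dI, Finsupp.lsum_single, LinearMap.toSpanSingleton_apply]

lemma key (ω : List ℕ+) : (dM + dI) ((dM + dI) (Finsupp.single ω (1:ℤ))) = 0 := by
  rw [step ω, map_add, map_sum, map_sum]
  simp only [map_smul, step]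
  have h1 : (∑ k ∈ range (ω.length - 1), ((-1:ℤ)^k) •
      ((∑ j ∈ range ((mergeAt ω k).length - 1),
          ((-1:ℤ)^j) • Finsupp.single (mergeAt (mergeAt ω k) j) (1:ℤ))
        + ∑ j ∈ range ((mergeAt ω k).length + 1),
          ((-1:ℤ)^j) • Finsupp.single (insertAt2 (mergeAt ω k) j) (1:ℤ)))
      = (∑ k ∈ range (ω.length - 1), ∑ j ∈ range (ω.length - 2),
          ((-1:ℤ)^(k+j)) • Finsupp.single (mergeAt (mergeAt ω k) j) (1:ℤ))
        + ∑ k ∈ range (ω.length - 1), ∑ j ∈ range ω.length,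
          ((-1:ℤ)^(k+j)) • Finsupp.single (insertAt2 (mergeAt ω k) j) (1:ℤ) := by
    rw [← Finset.sum_add_distrib]
    refine Finset.sum_congr rfl fun k hk => ?_
    simp only [mem_range] at hk
    rw [length_mergeAt ω k (by omega), show ω.length - 1 - 1 = ω.length - 2 by omega,
      show ω.length - 1 + 1 = ω.length by omega, smul_add, Finset.smul_sum, Finset.smul_sum]
    simp only [smul_smul, ← pow_add]
  have h2 : (∑ k ∈ range (ω.length + 1), ((-1:ℤ)^k) •
      ((∑ j ∈ range ((insertAt2 ω k).length - 1),
          ((-1:ℤ)^j) • Finsupp.single (mergeAt (insertAt2 ω k) j) (1:ℤ))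
        + ∑ j ∈ range ((insertAt2 ω k).length + 1),
          ((-1:ℤ)^j) • Finsupp.single (insertAt2 (insertAt2 ω k) j) (1:ℤ)))
      = (∑ k ∈ range (ω.length + 1), ∑ j ∈ range ω.length,
          ((-1:ℤ)^(k+j)) • Finsupp.single (mergeAt (insertAt2 ω k) j) (1:ℤ))
        + ∑ k ∈ range (ω.length + 1), ∑ j ∈ range (ω.length + 2),
          ((-1:ℤ)^(k+j)) • Finsupp.single (insertAt2 (insertAt2 ω k) j) (1:ℤ) := by
    rw [← Finset.sum_add_distrib]
    refine Finset.sum_congr rfl fun k hk => ?_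
    simp only [mem_range] at hk
    rw [length_insertAt2 ω k (by omega), show ω.length + 1 - 1 = ω.length by omega,
      smul_add, Finset.smul_sum, Finset.smul_sum]
    simp only [smul_smul, ← pow_add]
  rw [h1, h2]
  rw [← Finset.sum_product', ← Finset.sum_product', ← Finset.sum_product',
    ← Finset.sum_product']
  rw [sumA ω, sumD ω, zero_add, add_zero]
  exact sumBC ω

/-- the sum `∂ = ∂_M + ∂_I` is a differential: `∂ ∘ ∂ = 0`. -/
theorem sum_is_differential : (dM + dI).comp (dM + dI) = 0 := by
  apply Finsupp.lhom_ext
  intro a b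
  have hb : (Finsupp.single a b : List ℕ+ →₀ ℤ) = b • Finsupp.single a (1:ℤ) := by
    rw [Finsupp.smul_single, smul_eq_mul, mul_one]
  rw [LinearMap.comp_apply, LinearMap.zero_apply, hb, map_smul, map_smul, key, smul_zero]
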